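/- Let A be a bounded distributive lattice with □ : A → A satisfying □(a ⊓ b) = □a ⊓ □b and □⊤ = ⊤, and ♦ : A → A satisfying ♦(a ⊔ b) = ♦a ⊔ ♦b and ♦⊥ = ⊥, such that □a ⊓ ♦b ≤ ♦(a ⊓ b) for all a, b ∈ A. Let U, V be prime filters of A such that ♦a ∈ U for all a ∈ V. Then there exists a prime filter W with V ⊆ W such that ♦a ∈ U for all a ∈ W, and □a ∈ U implies a ∈ W for all a. -/

import Mathlib

/-- A prime filter of a bounded distributive lattice. -/
def IsPrimeFilter {A : Type*} [DistribLattice A] [BoundedOrder A] (F : Set A) : Prop :=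
  (∀ a b : A, a ∈ F → a ≤ b → b ∈ F) ∧
  (∀ a b : A, a ∈ F → b ∈ F → a ⊓ b ∈ F) ∧
  (⊤ : A) ∈ F ∧ (⊥ : A) ∉ F ∧
  (∀ a b : A, a ⊔ b ∈ F → a ∈ F ∨ b ∈ F)

/-!
Take for `W` a prime filter separating the filter generated by `V ∪ □⁻¹U` from the ideal
`♦⁻¹(A ∖ U)`, obtained from the prime ideal theorem for distributive lattices. The two are
disjoint because of the axiom `□a ⊓ ♦b ≤ ♦(a ⊓ b)`: if `v ∈ V`, `□b ∈ U` and `v ⊓ b ≤ c`, then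
`□b ⊓ ♦v ∈ U` lies below `♦c`, so `♦c ∈ U`.
-/

open Order

namespace Order

variable {α β : Type*}

theorem IsPFilter.preimage [SemilatticeInf α] [OrderTop α] [SemilatticeInf β] [OrderTop β]
    {F : Set β} (hF : IsPFilter F) (f : InfTopHom α β) : IsPFilter (f ⁻¹' F) := by
  let F' := hF.toPFilter
  refine .of_def ⟨⊤, show f ⊤ ∈ F' by simp⟩ ?_ ?_
  · intro x hx y hy
    exact ⟨x ⊓ y, show f (x ⊓ y) ∈ F' by simpa using F'.inf_mem hx hy, inf_le_left, inf_le_right⟩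
  · exact fun hxy hx => F'.mem_of_le (OrderHomClass.mono f hxy) hx

theorem IsIdeal.preimage [SemilatticeSup α] [OrderBot α] [SemilatticeSup β] [OrderBot β]
    {I : Set β} (hI : IsIdeal I) (f : SupBotHom α β) : IsIdeal (f ⁻¹' I) where
  IsLowerSet _ _ hxy hy := hI.IsLowerSet (OrderHomClass.mono f hxy) hy
  Nonempty := ⟨⊥, show f ⊥ ∈ hI.toIdeal by simp⟩
  Directed x hx y hy :=
    ⟨x ⊔ y, show f (x ⊔ y) ∈ hI.toIdeal by simpa using hI.toIdeal.sup_mem hx hy,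
      le_sup_left, le_sup_right⟩

theorem IsPFilter.inf_closure [SemilatticeInf α] {F G : Set α} (hF : IsPFilter F)
    (hG : IsPFilter G) : IsPFilter {x | ∃ f ∈ F, ∃ g ∈ G, f ⊓ g ≤ x} := by
  let F' := hF.toPFilter
  let G' := hG.toPFilter
  obtain ⟨f, hf⟩ := F'.nonempty
  obtain ⟨g, hg⟩ := G'.nonempty
  refine .of_def ⟨f ⊓ g, f, hf, g, hg, le_rfl⟩ ?_ ?_
  · rintro x ⟨f₁, hf₁, g₁, hg₁, hx⟩ y ⟨f₂, hf₂, g₂, hg₂, hy⟩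
    refine ⟨x ⊓ y, ⟨f₁ ⊓ f₂, F'.inf_mem hf₁ hf₂, g₁ ⊓ g₂, G'.inf_mem hg₁ hg₂, ?_⟩,
      inf_le_left, inf_le_right⟩
    calc f₁ ⊓ f₂ ⊓ (g₁ ⊓ g₂) = f₁ ⊓ g₁ ⊓ (f₂ ⊓ g₂) := inf_inf_inf_comm _ _ _ _
      _ ≤ x ⊓ y := inf_le_inf hx hy
  · rintro x y hxy ⟨f, hf, g, hg, hx⟩
    exact ⟨f, hf, g, hg, hx.trans hxy⟩

end Order

section PrimeFilter

variable {A : Type*} [DistribLattice A] [BoundedOrder A]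

theorem IsPrimeFilter.isPFilter {F : Set A} (hF : IsPrimeFilter F) : IsPFilter F :=
  .of_def ⟨⊤, hF.2.2.1⟩ (fun x hx y hy => ⟨x ⊓ y, hF.2.1 x y hx hy, inf_le_left, inf_le_right⟩)
    fun hxy hx => hF.1 _ _ hx hxy

theorem IsPrimeFilter.isIdeal_compl {F : Set A} (hF : IsPrimeFilter F) : IsIdeal Fᶜ where
  IsLowerSet _ _ hxy hy hx := hy (hF.1 _ _ hx hxy)
  Nonempty := ⟨⊥, hF.2.2.2.1⟩
  Directed x hx y hy := ⟨x ⊔ y, fun h => (hF.2.2.2.2 x y h).elim hx hy, le_sup_left, le_sup_right⟩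

theorem Order.Ideal.IsPrime.isPrimeFilter_compl {J : Ideal A} (hJ : J.IsPrime) :
    IsPrimeFilter (J : Set A)ᶜ := by
  let F := hJ.compl_filter.toPFilter
  refine ⟨fun x y hx hxy => F.mem_of_le hxy hx, fun x y hx hy => F.inf_mem hx hy,
    hJ.toIsProper.top_notMem, fun h => h J.bot_mem,
    fun x y hxy => not_and_or.mp fun h => hxy (J.sup_mem h.1 h.2)⟩

theorem exists_isPrimeFilter_of_disjoint {F I : Set A} (hF : IsPFilter F) (hI : IsIdeal I)
    (hFI : Disjoint F I) : ∃ W, IsPrimeFilter W ∧ F ⊆ W ∧ Disjoint W I := by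
  obtain ⟨J, hJ, hIJ, hFJ⟩ :=
    DistribLattice.prime_ideal_of_disjoint_filter_ideal (F := hF.toPFilter) (I := hI.toIdeal) hFI
  exact ⟨(J : Set A)ᶜ, hJ.isPrimeFilter_compl, Set.subset_compl_iff_disjoint_right.mpr hFJ,
    Set.disjoint_compl_left_iff_subset.mpr hIJ⟩

end PrimeFilter

theorem stmt14 {A : Type*} [DistribLattice A] [BoundedOrder A]
    (box dia : A → A)
    (hb1 : ∀ a b : A, box (a ⊓ b) = box a ⊓ box b) (hb2 : box ⊤ = ⊤)
    (hd1 : ∀ a b : A, dia (a ⊔ b) = dia a ⊔ dia b) (hd2 : dia ⊥ = ⊥)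
    (hax : ∀ a b : A, box a ⊓ dia b ≤ dia (a ⊓ b))
    (U V : Set A) (hU : IsPrimeFilter U) (hV : IsPrimeFilter V)
    (hUV : ∀ a : A, a ∈ V → dia a ∈ U) :
    ∃ W : Set A, IsPrimeFilter W ∧ V ⊆ W ∧
      (∀ a : A, a ∈ W → dia a ∈ U) ∧ (∀ a : A, box a ∈ U → a ∈ W) := by
  let boxHom : InfTopHom A A := ⟨⟨box, hb1⟩, hb2⟩
  let diaHom : SupBotHom A A := ⟨⟨dia, hd1⟩, hd2⟩
  have hbox_top : box ⊤ ∈ U := by rw [hb2]; exact hU.2.2.1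
  set F : Set A := {x | ∃ v ∈ V, ∃ b ∈ box ⁻¹' U, v ⊓ b ≤ x}
  have hF : IsPFilter F := hV.isPFilter.inf_closure (hU.isPFilter.preimage boxHom)
  have hFU : F ⊆ dia ⁻¹' U := by
    rintro x ⟨v, hv, b, hb, hx⟩
    have hle : box b ⊓ dia v ≤ dia x :=
      (hax b v).trans (OrderHomClass.mono diaHom (inf_comm b v ▸ hx))
    exact hU.1 _ _ (hU.2.1 _ _ hb (hUV v hv)) hle
  obtain ⟨W, hW, hFW, hWU⟩ := exists_isPrimeFilter_of_disjoint hF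
    (hU.isIdeal_compl.preimage diaHom) (Set.disjoint_compl_right_iff_subset.mpr hFU)
  refine ⟨W, hW, fun v hv => hFW ⟨v, hv, ⊤, hbox_top, inf_le_left⟩,
    fun a ha => Set.disjoint_compl_right_iff_subset.mp hWU ha,
    fun a ha => hFW ⟨⊤, hV.2.2.1, a, ha, inf_le_right⟩⟩
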